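/- Strong convexity and unique minimizer of the Phase II inner objective (key claim in the proof of Theorem 3.5). Let Q ∈ S^n_+ with Q ≠ 0, W := Range(Q), A ∈ ℝ^{m×n}, b ∈ ℝ^m, c ∈ ℝ^n, C = {x ∈ ℝ^n : l ≤ x ≤ u} a nonempty box, σ > 0, τ > 0, x̂ ∈ ℝ^n, ŵ ∈ W, ŷ ∈ ℝ^m. Define φ(w, y) := L̃_σ(w, y; x̂) + (τ/2σ)(‖w − ŵ‖²_Q + ‖y − ŷ‖²) for (w, y) ∈ W × ℝ^m, where L̃_σ(w, y; x̂) := −⟨Qw − A*y + c, Π_C(x̂ − σ(Qw − A*y + c))⟩ − (1/2σ)‖Π_C(x̂ − σ(Qw − A*y + c)) − x̂‖² + ½⟨w, Qw⟩ − ⟨b, y⟩. Then φ is a convex, continuously differentiable function on W × ℝ^m that is strongly convex on W × ℝ^m; consequently φ has a unique minimizer over W × ℝ^m, and for any (w⁰, y⁰) ∈ W × ℝ^m the level set {(w, y) ∈ W × ℝ^m : φ(w, y) ≤ φ(w⁰, y⁰)} is compact. -/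

import Mathlib

open RealInnerProductSpace Matrix

noncomputable section

/-- The box `C = {x ∈ ℝⁿ : l ≤ x ≤ u}` with extended-real bounds. -/
def boxSet {n : ℕ} (l u : Fin n → EReal) : Set (EuclideanSpace ℝ (Fin n)) :=
  {x | ∀ i, l i ≤ (x i : EReal) ∧ (x i : EReal) ≤ u i}

/-- The augmented Lagrangian
`L̃_σ(w, y; x̂) := −⟨Qw − A*y + c, Π_C(x̂ − σ(Qw − A*y + c))⟩
  − (1/2σ)‖Π_C(x̂ − σ(Qw − A*y + c)) − x̂‖² + ½⟨w, Qw⟩ − ⟨b, y⟩`. -/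
def Ltilde {n m : ℕ} (Q : Matrix (Fin n) (Fin n) ℝ) (A : Matrix (Fin m) (Fin n) ℝ)
    (b : EuclideanSpace ℝ (Fin m)) (c : EuclideanSpace ℝ (Fin n))
    (projC : EuclideanSpace ℝ (Fin n) → EuclideanSpace ℝ (Fin n)) (σ : ℝ)
    (xh : EuclideanSpace ℝ (Fin n))
    (w : EuclideanSpace ℝ (Fin n)) (y : EuclideanSpace ℝ (Fin m)) : ℝ :=
  -⟪Matrix.toEuclideanLin Q w - Matrix.toEuclideanLin Aᵀ y + c,
      projC (xh - σ • (Matrix.toEuclideanLin Q w - Matrix.toEuclideanLin Aᵀ y + c))⟫ -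
    (1 / (2 * σ)) *
      ‖projC (xh - σ • (Matrix.toEuclideanLin Q w - Matrix.toEuclideanLin Aᵀ y + c)) - xh‖ ^ 2 +
    (1 / 2) * ⟪w, Matrix.toEuclideanLin Q w⟫ - ⟪b, y⟫

/-- The Phase II inner objective
`φ(w, y) := L̃_σ(w, y; x̂) + (τ/2σ)(‖w − ŵ‖²_Q + ‖y − ŷ‖²)`. -/
def phiObj {n m : ℕ} (Q : Matrix (Fin n) (Fin n) ℝ) (A : Matrix (Fin m) (Fin n) ℝ)
    (b : EuclideanSpace ℝ (Fin m)) (c : EuclideanSpace ℝ (Fin n))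
    (projC : EuclideanSpace ℝ (Fin n) → EuclideanSpace ℝ (Fin n)) (σ τ : ℝ)
    (xh : EuclideanSpace ℝ (Fin n)) (wh : EuclideanSpace ℝ (Fin n))
    (yh : EuclideanSpace ℝ (Fin m))
    (pr : EuclideanSpace ℝ (Fin n) × EuclideanSpace ℝ (Fin m)) : ℝ :=
  Ltilde Q A b c projC σ xh pr.1 pr.2 +
    (τ / (2 * σ)) * (⟪pr.1 - wh, Matrix.toEuclideanLin Q (pr.1 - wh)⟫ + ‖pr.2 - yh‖ ^ 2)

set_option maxHeartbeats 2000000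

namespace PhaseIIAux
variable {E : Type*} [NormedAddCommGroup E] [InnerProductSpace ℝ E]

/-- Moreau-type function `v ↦ ½‖v‖² − ½‖v − projC v‖²`. -/
def mor (projC : E → E) (v : E) : ℝ := (1/2) * ‖v‖^2 - (1/2) * ‖v - projC v‖^2

theorem proj_varineq {C : Set E} (hCc : Convex ℝ C) {projC : E → E}
    (hproj : ∀ z, projC z ∈ C ∧ ∀ s ∈ C, ‖z - projC z‖ ≤ ‖z - s‖) (v : E) :
    ∀ t ∈ C, ⟪v - projC v, t - projC v⟫ ≤ 0 := by
  haveI : Nonempty C := ⟨⟨projC v, (hproj v).1⟩⟩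
  have hbdd : BddBelow (Set.range fun w : C => ‖v - (w : E)‖) := by
    refine ⟨0, ?_⟩; rintro x ⟨w, rfl⟩; positivity
  have h1 : ‖v - projC v‖ = ⨅ w : C, ‖v - w‖ :=
    le_antisymm (le_ciInf fun w => (hproj v).2 w w.2) (ciInf_le hbdd ⟨projC v, (hproj v).1⟩)
  exact (norm_eq_iInf_iff_real_inner_le_zero hCc (hproj v).1).1 h1

theorem proj_lip {C : Set E} (hCc : Convex ℝ C) {projC : E → E}
    (hproj : ∀ z, projC z ∈ C ∧ ∀ s ∈ C, ‖z - projC z‖ ≤ ‖z - s‖) (v v' : E) :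
    ‖projC v - projC v'‖ ≤ ‖v - v'‖ := by
  have h1 := proj_varineq hCc hproj v (projC v') (hproj v').1
  have h2 := proj_varineq hCc hproj v' (projC v) (hproj v).1
  have key : ‖projC v - projC v'‖^2 ≤ ⟪v - v', projC v - projC v'⟫ := by
    have e1 : ⟪v - projC v, projC v - projC v'⟫ ≥ 0 := by
      have : ⟪v - projC v, projC v' - projC v⟫ = -⟪v - projC v, projC v - projC v'⟫ := by
        rw [← inner_neg_right]; congr 1; abel
      linarith [h1, this.symm.le]
    have e2 : ⟪v' - projC v', projC v - projC v'⟫ ≤ 0 := h2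
    have expand : ⟪v - v', projC v - projC v'⟫ =
        ⟪v - projC v, projC v - projC v'⟫ - ⟪v' - projC v', projC v - projC v'⟫ +
          ‖projC v - projC v'‖^2 := by
      rw [← real_inner_self_eq_norm_sq]; simp only [inner_sub_left]; ring
    linarith
  have h3 : ⟪v - v', projC v - projC v'⟫ ≤ ‖v - v'‖ * ‖projC v - projC v'‖ :=
    real_inner_le_norm _ _
  nlinarith [norm_nonneg (projC v - projC v'), norm_nonneg (v - v')]


theorem mor_eq (projC : E → E) (v : E) :
    mor projC v = ⟪v, projC v⟫ - (1/2) * ‖projC v‖^2 := by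
  have : ‖v - projC v‖^2 = ‖v‖^2 - 2 * ⟪v, projC v⟫ + ‖projC v‖^2 := norm_sub_sq_real v _
  simp only [mor, this]; ring

theorem mor_ge {C : Set E} {projC : E → E}
    (hproj : ∀ z, projC z ∈ C ∧ ∀ s ∈ C, ‖z - projC z‖ ≤ ‖z - s‖) (v : E) {t : E} (ht : t ∈ C) :
    ⟪v, t⟫ - (1/2) * ‖t‖^2 ≤ mor projC v := by
  have h := (hproj v).2 t ht
  have h2 : ‖v - projC v‖^2 ≤ ‖v - t‖^2 := by
    have := norm_nonneg (v - projC v); nlinarith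
  have e : ‖v - t‖^2 = ‖v‖^2 - 2 * ⟪v, t⟫ + ‖t‖^2 := norm_sub_sq_real v t
  simp only [mor]; nlinarith

theorem mor_convexOn {C : Set E} {projC : E → E}
    (hproj : ∀ z, projC z ∈ C ∧ ∀ s ∈ C, ‖z - projC z‖ ≤ ‖z - s‖) :
    ConvexOn ℝ Set.univ (mor projC) := by
  refine ⟨convex_univ, fun x _ y _ a b ha hb hab => ?_⟩
  set p := projC (a • x + b • y) with hp
  have hpC : p ∈ C := (hproj _).1
  have e : mor projC (a • x + b • y) =
      a * (⟪x, p⟫ - (1/2) * ‖p‖^2) + b * (⟪y, p⟫ - (1/2) * ‖p‖^2) := by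
    rw [mor_eq, ← hp, inner_add_left, real_inner_smul_left, real_inner_smul_left]
    have : a * (1/2 * ‖p‖^2) + b * (1/2 * ‖p‖^2) = 1/2 * ‖p‖^2 := by
      rw [← add_mul, hab, one_mul]
    linarith
  rw [e]
  have l1 := mor_ge hproj x hpC
  have l2 := mor_ge hproj y hpC
  have := add_le_add (mul_le_mul_of_nonneg_left l1 ha) (mul_le_mul_of_nonneg_left l2 hb)
  simpa [smul_eq_mul] using this

theorem mor_hasFDerivAt {C : Set E} (hCc : Convex ℝ C) {projC : E → E}
    (hproj : ∀ z, projC z ∈ C ∧ ∀ s ∈ C, ‖z - projC z‖ ≤ ‖z - s‖) (v : E) :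
    HasFDerivAt (mor projC) (innerSL ℝ (projC v)) v := by
  rw [hasFDerivAt_iff_isLittleO_nhds_zero, Asymptotics.isLittleO_iff]
  intro ε hε
  filter_upwards [Metric.ball_mem_nhds (0 : E) hε] with h hh
  have hhn : ‖h‖ < ε := by simpa using hh
  set P := projC v with hP
  set P' := projC (v + h) with hP'
  have lower : ⟪h, P⟫ ≤ mor projC (v + h) - mor projC v := by
    have l := mor_ge hproj (v + h) (hproj v).1
    rw [mor_eq projC v, inner_add_left] at *
    linarith
  have upper : mor projC (v + h) - mor projC v ≤ ⟪h, P⟫ + ‖h‖^2 := by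
    have l := mor_ge hproj v (hproj (v + h)).1
    rw [mor_eq projC (v + h), inner_add_left] at *
    have split : ⟪h, P'⟫ = ⟪h, P⟫ + ⟪h, P' - P⟫ := by
      rw [inner_sub_right]; ring
    have cs : ⟪h, P' - P⟫ ≤ ‖h‖ * ‖P' - P‖ := real_inner_le_norm _ _
    have lip : ‖P' - P‖ ≤ ‖h‖ := by
      have := proj_lip hCc hproj (v + h) v
      simpa using this
    nlinarith [norm_nonneg h]
  have innerSL_eq : (innerSL ℝ (projC v)) h = ⟪h, P⟫ := by
    simp [real_inner_comm, hP]
  rw [Real.norm_eq_abs, abs_le, innerSL_eq]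
  constructor
  · nlinarith [norm_nonneg h]
  · nlinarith [norm_nonneg h]

theorem mor_contDiff {C : Set E} (hCc : Convex ℝ C) {projC : E → E}
    (hproj : ∀ z, projC z ∈ C ∧ ∀ s ∈ C, ‖z - projC z‖ ≤ ‖z - s‖) :
    ContDiff ℝ 1 (mor projC) := by
  rw [contDiff_one_iff_fderiv]
  refine ⟨fun v => (mor_hasFDerivAt hCc hproj v).differentiableAt, ?_⟩
  have e : (fderiv ℝ (mor projC)) = fun v => innerSL ℝ (projC v) :=
    funext fun v => (mor_hasFDerivAt hCc hproj v).fderiv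
  rw [e]
  have hlip : LipschitzWith 1 projC := by
    refine LipschitzWith.of_dist_le_mul fun a b => ?_
    simpa [dist_eq_norm] using proj_lip hCc hproj a b
  exact (innerSL ℝ).continuous.comp hlip.continuous


theorem quad_combo (T : E →ₗ[ℝ] E) (u v : E) {a b : ℝ} (hab : a + b = 1) :
    ⟪a • u + b • v, T (a • u + b • v)⟫ =
      a * ⟪u, T u⟫ + b * ⟪v, T v⟫ - a * b * ⟪u - v, T (u - v)⟫ := by
  obtain rfl : b = 1 - a := by linarith
  simp only [map_add, _root_.map_smul, map_sub, inner_add_left, inner_add_right, inner_sub_left,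
    inner_sub_right, real_inner_smul_left, real_inner_smul_right]
  ring

theorem norm_combo (u v : E) {a b : ℝ} (hab : a + b = 1) :
    ‖a • u + b • v‖^2 = a * ‖u‖^2 + b * ‖v‖^2 - a * b * ‖u - v‖^2 := by
  have := quad_combo (LinearMap.id : E →ₗ[ℝ] E) u v hab
  simpa only [LinearMap.id_apply, real_inner_self_eq_norm_sq] using this

theorem psd_ker (T : E →ₗ[ℝ] E) (hsym : ∀ x y, ⟪T x, y⟫ = ⟪x, T y⟫)
    (hpsd : ∀ x, 0 ≤ ⟪x, T x⟫) {w : E} (hw : ⟪w, T w⟫ = 0) : T w = 0 := by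
  by_contra hne
  have hTw : 0 < ‖T w‖^2 := by
    have := norm_pos_iff.2 hne; positivity
  set K := ⟪T w, T (T w)⟫ with hK
  have hK0 : 0 ≤ K := hpsd _
  have key : ∀ t : ℝ, 0 ≤ 2 * t * ‖T w‖^2 + t^2 * K := by
    intro t
    have h0 := hpsd (w + t • T w)
    have e2 : ⟪w, T (T w)⟫ = ‖T w‖^2 := by
      rw [← hsym, real_inner_self_eq_norm_sq]
    simp only [map_add, _root_.map_smul, inner_add_left, inner_add_right,
      real_inner_smul_left, real_inner_smul_right, hw, e2, real_inner_self_eq_norm_sq] at h0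
    nlinarith [h0]
  have hKpos : 0 < K := by
    rcases hK0.lt_or_eq with h | h
    · exact h
    · have := key (-1); nlinarith
  have h := key (-(‖T w‖^2 / K))
  have hKne : K ≠ 0 := hKpos.ne'
  field_simp at h
  nlinarith [hTw, hKpos, mul_pos hTw hTw, mul_pos hKpos hKpos]

theorem exists_lam [FiniteDimensional ℝ E] (T : E →ₗ[ℝ] E)
    (hsym : ∀ x y, ⟪T x, y⟫ = ⟪x, T y⟫) (hpsd : ∀ x, 0 ≤ ⟪x, T x⟫) :
    ∃ lam : ℝ, 0 < lam ∧ ∀ w ∈ LinearMap.range T, lam * ‖w‖^2 ≤ ⟪w, T w⟫ := by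
  set W := LinearMap.range T with hW
  by_cases htriv : ∀ w ∈ W, w = (0 : E)
  · refine ⟨1, one_pos, fun w hw => ?_⟩
    rw [htriv w hw]; simp
  push_neg at htriv
  obtain ⟨w1, hw1W, hw1⟩ := htriv
  set S : Set E := Metric.sphere 0 1 ∩ (W : Set E) with hS
  have hSne : S.Nonempty := by
    refine ⟨‖w1‖⁻¹ • w1, ?_, W.smul_mem _ hw1W⟩
    simp [norm_smul, inv_mul_cancel₀ (norm_ne_zero_iff.2 hw1)]
  have hScompact : IsCompact S :=
    (isCompact_sphere 0 1).inter_right (Submodule.closed_of_finiteDimensional W)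
  have hcont : Continuous fun w : E => ⟪w, T w⟫ :=
    continuous_id.inner (T.continuous_of_finiteDimensional)
  obtain ⟨w0, hw0S, hmin⟩ := hScompact.exists_isMinOn hSne hcont.continuousOn
  have hw0n : ‖w0‖ = 1 := by simpa using hw0S.1
  have hw0W : w0 ∈ W := hw0S.2
  have hlampos : 0 < ⟪w0, T w0⟫ := by
    rcases (hpsd w0).lt_or_eq with h | h
    · exact h
    · exfalso
      have hT0 : T w0 = 0 := psd_ker T hsym hpsd h.symm
      obtain ⟨z, hz⟩ := hw0W
      have : ⟪w0, w0⟫ = 0 := by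
        rw [← hz, hsym, hz, hT0, inner_zero_right]
      have hn0 : w0 = 0 := by
        rwa [inner_self_eq_zero] at this
      rw [hn0] at hw0n; simp at hw0n
  refine ⟨⟪w0, T w0⟫, hlampos, fun w hw => ?_⟩
  rcases eq_or_ne w 0 with rfl | hwne
  · simp
  have hwn : 0 < ‖w‖ := norm_pos_iff.2 hwne
  have hu : (‖w‖⁻¹ • w) ∈ S := by
    refine ⟨?_, W.smul_mem _ hw⟩
    simp [norm_smul, inv_mul_cancel₀ hwn.ne']
  have := hmin hu
  have he : ⟪‖w‖⁻¹ • w, T (‖w‖⁻¹ • w)⟫ = ‖w‖⁻¹ * ‖w‖⁻¹ * ⟪w, T w⟫ := by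
    rw [_root_.map_smul, real_inner_smul_left, real_inner_smul_right]; ring
  have h6 : ⟪w0, T w0⟫ ≤ ⟪‖w‖⁻¹ • w, T (‖w‖⁻¹ • w)⟫ := this
  rw [he] at h6
  have h2 : ⟪w0, T w0⟫ * ‖w‖^2 ≤ ⟪w, T w⟫ := by
    have hw2 : (0:ℝ) < ‖w‖^2 := by positivity
    calc ⟪w0, T w0⟫ * ‖w‖^2 ≤ (‖w‖⁻¹ * ‖w‖⁻¹ * ⟪w, T w⟫) * ‖w‖^2 := by nlinarith [h6]
      _ = ⟪w, T w⟫ := by field_simp [pow_two]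
  linarith


theorem smul_norm_sq (σ : ℝ) (z : E) : ‖σ • z‖^2 = σ^2 * ‖z‖^2 := by
  rw [norm_smul]; simp [mul_pow, sq_abs]

theorem ltilde_key {σ : ℝ} (hσ : σ ≠ 0) (z xh P : E) :
    -⟪z, P⟫ - (1/(2*σ)) * ‖P - xh‖^2 =
      (1/σ) * ((1/2) * ‖xh - σ • z‖^2 - (1/2) * ‖xh - σ • z - P‖^2) - (1/(2*σ)) * ‖xh‖^2 := by
  have e1 : ‖xh - σ • z‖^2 = ‖xh‖^2 - 2 * (σ * ⟪xh, z⟫) + σ^2 * ‖z‖^2 := by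
    rw [norm_sub_sq_real, real_inner_smul_right, smul_norm_sq]
  have e2 : ‖xh - σ • z - P‖^2 = ‖xh - P‖^2 - 2 * (σ * (⟪xh, z⟫ - ⟪P, z⟫)) + σ^2 * ‖z‖^2 := by
    rw [sub_right_comm, norm_sub_sq_real, real_inner_smul_right, inner_sub_left, smul_norm_sq]
  have e3 : ‖P - xh‖^2 = ‖xh - P‖^2 := by rw [norm_sub_rev]
  have e5 : ⟪z, P⟫ = ⟪P, z⟫ := real_inner_comm _ _
  rw [e1, e2, e3, e5]
  field_simp
  ring

end PhaseIIAux


/-- **Strong convexity and unique minimizer of the Phase II inner objective (key claim in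
the proof of Theorem 3.5).**  Let `Q ∈ S^n₊`, `Q ≠ 0`, `W := Range(Q)`, `C` a nonempty box,
`σ, τ > 0`, `x̂ ∈ ℝⁿ`, `ŵ ∈ W`, `ŷ ∈ ℝᵐ`.  Then
`φ(w, y) := L̃_σ(w, y; x̂) + (τ/2σ)(‖w − ŵ‖²_Q + ‖y − ŷ‖²)` is convex, continuously
differentiable and strongly convex on `W × ℝᵐ`; consequently it has a unique minimizer over
`W × ℝᵐ` and all its level sets (within `W × ℝᵐ`) are compact. -/
theorem phase_II_inner_objective_strongly_convex
    {n m : ℕ} (Q : Matrix (Fin n) (Fin n) ℝ) (hQ : Q.PosSemidef) (hQ_ne : Q ≠ 0)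
    (A : Matrix (Fin m) (Fin n) ℝ)
    (b : EuclideanSpace ℝ (Fin m)) (c : EuclideanSpace ℝ (Fin n))
    (l u : Fin n → EReal) (hlu : ∀ i, l i ≤ u i)
    (C : Set (EuclideanSpace ℝ (Fin n))) (hC : C = boxSet l u) (hC_ne : C.Nonempty)
    (projC : EuclideanSpace ℝ (Fin n) → EuclideanSpace ℝ (Fin n))
    (hproj : ∀ z, projC z ∈ C ∧ ∀ s ∈ C, ‖z - projC z‖ ≤ ‖z - s‖)
    (σ τ : ℝ) (hσ : 0 < σ) (hτ : 0 < τ)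
    (xh wh : EuclideanSpace ℝ (Fin n)) (yh : EuclideanSpace ℝ (Fin m))
    (hwh : wh ∈ LinearMap.range (Matrix.toEuclideanLin Q))
    (s : Set (EuclideanSpace ℝ (Fin n) × EuclideanSpace ℝ (Fin m)))
    (hs : s = {pr | pr.1 ∈ LinearMap.range (Matrix.toEuclideanLin Q)}) :
    ConvexOn ℝ s (phiObj Q A b c projC σ τ xh wh yh) ∧
    ContDiffOn ℝ 1 (phiObj Q A b c projC σ τ xh wh yh) s ∧
    (∃ μ : ℝ, 0 < μ ∧ StrongConvexOn s μ (phiObj Q A b c projC σ τ xh wh yh)) ∧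
    (∃! pr, pr ∈ s ∧ ∀ qr ∈ s,
      phiObj Q A b c projC σ τ xh wh yh pr ≤ phiObj Q A b c projC σ τ xh wh yh qr) ∧
    (∀ pr0 ∈ s, IsCompact {pr | pr ∈ s ∧
      phiObj Q A b c projC σ τ xh wh yh pr ≤ phiObj Q A b c projC σ τ xh wh yh pr0}) := by
  classical
  -- Notation
  set T : EuclideanSpace ℝ (Fin n) →ₗ[ℝ] EuclideanSpace ℝ (Fin n) := Matrix.toEuclideanLin Q with hT
  set B : EuclideanSpace ℝ (Fin m) →ₗ[ℝ] EuclideanSpace ℝ (Fin n) := Matrix.toEuclideanLin Aᵀ with hB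
  set φ := phiObj Q A b c projC σ τ xh wh yh with hφ
  have hσ' : (σ : ℝ) ≠ 0 := hσ.ne'
  -- convexity of the box
  have hCc : Convex ℝ C := by
    rw [hC]
    intro x hx y hy a b' ha hb hab i
    have hxi := hx i
    have hyi := hy i
    have hcoord : (a • x + b' • y) i = a * x i + b' * y i := by
      simp [PiLp.add_apply, PiLp.smul_apply, smul_eq_mul]
    constructor
    · rw [hcoord]
      have h1 : min (x i) (y i) ≤ a * x i + b' * y i := by
        have k1 := mul_le_mul_of_nonneg_left (min_le_left (x i) (y i)) ha
        have k2 := mul_le_mul_of_nonneg_left (min_le_right (x i) (y i)) hb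
        have k3 : a * min (x i) (y i) + b' * min (x i) (y i) = min (x i) (y i) := by
          rw [← add_mul, hab, one_mul]
        linarith
      calc l i ≤ ((min (x i) (y i) : ℝ) : EReal) := by
            rw [EReal.coe_strictMono.monotone.map_min]
            exact le_min hxi.1 hyi.1
        _ ≤ _ := EReal.coe_le_coe_iff.2 h1
    · rw [hcoord]
      have h1 : a * x i + b' * y i ≤ max (x i) (y i) := by
        have k1 := mul_le_mul_of_nonneg_left (le_max_left (x i) (y i)) ha
        have k2 := mul_le_mul_of_nonneg_left (le_max_right (x i) (y i)) hb
        have k3 : a * max (x i) (y i) + b' * max (x i) (y i) = max (x i) (y i) := by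
          rw [← add_mul, hab, one_mul]
        linarith
      calc ((a * x i + b' * y i : ℝ) : EReal) ≤ ((max (x i) (y i) : ℝ) : EReal) :=
            EReal.coe_le_coe_iff.2 h1
        _ = max ((x i : ℝ) : EReal) (y i : EReal) := EReal.coe_strictMono.monotone.map_max
        _ ≤ u i := max_le hxi.2 hyi.2
  -- basic operator facts
  have hsym : ∀ x y : EuclideanSpace ℝ (Fin n), ⟪T x, y⟫ = ⟪x, T y⟫ := fun x y =>
    (Matrix.isHermitian_iff_isSymmetric.1 hQ.1) x y
  have hpsd : ∀ x : EuclideanSpace ℝ (Fin n), 0 ≤ ⟪x, T x⟫ := by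
    intro x
    have := hQ.dotProduct_mulVec_nonneg (WithLp.equiv 2 _ x)
    simpa [hT, PiLp.inner_apply, Matrix.toEuclideanLin_apply, dotProduct, mul_comm] using this
  obtain ⟨lam, hlampos, hlam⟩ := PhaseIIAux.exists_lam T hsym hpsd
  -- decomposition φ = G + Qd - const
  set G : EuclideanSpace ℝ (Fin n) × EuclideanSpace ℝ (Fin m) → ℝ := fun pr =>
    (1/σ) * PhaseIIAux.mor projC (xh - σ • (T pr.1 - B pr.2 + c)) - ⟪b, pr.2⟫ with hG
  set Qd : EuclideanSpace ℝ (Fin n) × EuclideanSpace ℝ (Fin m) → ℝ := fun pr =>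
    (1/2) * ⟪pr.1, T pr.1⟫ + (τ/(2*σ)) * (⟪pr.1 - wh, T (pr.1 - wh)⟫ + ‖pr.2 - yh‖^2) with hQd
  have hdecomp : ∀ pr, φ pr = G pr + Qd pr - (1/(2*σ)) * ‖xh‖^2 := by
    intro pr
    have key := PhaseIIAux.ltilde_key hσ' (T pr.1 - B pr.2 + c) xh
      (projC (xh - σ • (T pr.1 - B pr.2 + c)))
    simp only [hφ, phiObj, Ltilde, hG, hQd, PhaseIIAux.mor, ← hT, ← hB] at *
    rw [show τ / (2 * σ) = τ/(2*σ) from rfl]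
    linarith [key]
  -- quadratic combination identity
  have hQdcombo : ∀ (x y : EuclideanSpace ℝ (Fin n) × EuclideanSpace ℝ (Fin m)) (a : ℝ), 0 ≤ a → a ≤ 1 →
      Qd (a • x + (1-a) • y) = a * Qd x + (1-a) * Qd y -
        a * (1-a) * ((1/2 + τ/(2*σ)) * ⟪x.1 - y.1, T (x.1 - y.1)⟫
          + (τ/(2*σ)) * ‖x.2 - y.2‖^2) := by
    intro x y a _ _
    have hab : a + (1-a) = 1 := by ring
    have h1 := PhaseIIAux.quad_combo T x.1 y.1 hab
    have h2 := PhaseIIAux.quad_combo T (x.1 - wh) (y.1 - wh) hab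
    have h3 := PhaseIIAux.norm_combo (x.2 - yh) (y.2 - yh) hab
    have e1 : (a • x + (1-a) • y).1 = a • x.1 + (1-a) • y.1 := rfl
    have e2 : (a • x + (1-a) • y).2 = a • x.2 + (1-a) • y.2 := rfl
    have ew : a • x.1 + (1-a) • y.1 - wh = a • (x.1 - wh) + (1-a) • (y.1 - wh) := by
      module
    have ey : a • x.2 + (1-a) • y.2 - yh = a • (x.2 - yh) + (1-a) • (y.2 - yh) := by
      module
    have ed1 : (x.1 - wh) - (y.1 - wh) = x.1 - y.1 := by abel
    have ed2 : (x.2 - yh) - (y.2 - yh) = x.2 - y.2 := by abel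
    rw [ed1] at h2
    rw [ed2] at h3
    simp only [hQd]
    rw [e1, e2, ew, ey, h1, h2, h3]
    ring
  -- properties of s
  subst hs
  have hsconvex : Convex ℝ {pr : EuclideanSpace ℝ (Fin n) × EuclideanSpace ℝ (Fin m) | pr.1 ∈ LinearMap.range T} := by
    intro x hx y hy a b' ha hb hab
    have : (a • x + b' • y).1 = a • x.1 + b' • y.1 := rfl
    simp only [Set.mem_setOf_eq, this]
    exact Submodule.add_mem _ (Submodule.smul_mem _ _ hx) (Submodule.smul_mem _ _ hy)
  have hsclosed : IsClosed {pr : EuclideanSpace ℝ (Fin n) × EuclideanSpace ℝ (Fin m) | pr.1 ∈ LinearMap.range T} := by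
    have : {pr : EuclideanSpace ℝ (Fin n) × EuclideanSpace ℝ (Fin m) | pr.1 ∈ LinearMap.range T} =
        Prod.fst ⁻¹' ((LinearMap.range T : Submodule ℝ (EuclideanSpace ℝ (Fin n))) : Set (EuclideanSpace ℝ (Fin n))) := rfl
    rw [this]
    exact (Submodule.closed_of_finiteDimensional _).preimage continuous_fst
  -- strong convexity
  set μ : ℝ := min ((1 + τ/σ) * lam) (τ/σ) with hμ
  have hμpos : 0 < μ := by
    refine lt_min ?_ (div_pos hτ hσ)
    have : (0:ℝ) < 1 + τ/σ := by positivity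
    exact mul_pos this hlampos
  have hμ1 : μ/2 ≤ (1/2 + τ/(2*σ)) * lam := by
    have h := min_le_left ((1 + τ/σ) * lam) (τ/σ)
    rw [← hμ] at h
    have e0 : (1 + τ/σ)/2 = 1/2 + τ/(2*σ) := by rw [add_div, div_div, mul_comm σ 2]
    have e : ((1 + τ/σ) * lam) / 2 = (1/2 + τ/(2*σ)) * lam := by
      rw [mul_div_right_comm, e0]
    rw [← e]; linarith
  have hμ2 : μ/2 ≤ τ/(2*σ) := by
    have h := min_le_right ((1 + τ/σ) * lam) (τ/σ)
    rw [← hμ] at h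
    have e : (τ/σ)/2 = τ/(2*σ) := by rw [div_div, mul_comm σ 2]
    rw [← e]; linarith
  have hGconv : ∀ (x y : EuclideanSpace ℝ (Fin n) × EuclideanSpace ℝ (Fin m)) (a : ℝ), 0 ≤ a → a ≤ 1 →
      G (a • x + (1-a) • y) ≤ a * G x + (1-a) * G y := by
    intro x y a ha ha1
    have hab : a + (1-a) = 1 := by ring
    have hb : (0:ℝ) ≤ 1 - a := by linarith
    have hv : xh - σ • (T (a • x + (1-a) • y).1 - B (a • x + (1-a) • y).2 + c) =
        a • (xh - σ • (T x.1 - B x.2 + c)) + (1-a) • (xh - σ • (T y.1 - B y.2 + c)) := by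
      have e1 : (a • x + (1-a) • y).1 = a • x.1 + (1-a) • y.1 := rfl
      have e2 : (a • x + (1-a) • y).2 = a • x.2 + (1-a) • y.2 := rfl
      rw [e1, e2, map_add, map_add, _root_.map_smul, _root_.map_smul, _root_.map_smul,
        _root_.map_smul]
      module
    have hmor := (PhaseIIAux.mor_convexOn hproj).2 (Set.mem_univ
      (xh - σ • (T x.1 - B x.2 + c))) (Set.mem_univ (xh - σ • (T y.1 - B y.2 + c))) ha hb hab
    have hinner : ⟪b, (a • x + (1-a) • y).2⟫ = a * ⟪b, x.2⟫ + (1-a) * ⟪b, y.2⟫ := by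
      have e2 : (a • x + (1-a) • y).2 = a • x.2 + (1-a) • y.2 := rfl
      rw [e2, inner_add_right, real_inner_smul_right, real_inner_smul_right]
    simp only [hG]
    rw [hv, hinner]
    have h1σ : (0:ℝ) ≤ 1/σ := by positivity
    have := mul_le_mul_of_nonneg_left hmor h1σ
    simp only [smul_eq_mul] at this
    nlinarith [this]
  have hsconv : StrongConvexOn {pr : EuclideanSpace ℝ (Fin n) × EuclideanSpace ℝ (Fin m) | pr.1 ∈ LinearMap.range T} μ φ := by
    refine ⟨hsconvex, ?_⟩
    intro x hx y hy a b' ha hb hab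
    obtain rfl : b' = 1 - a := by linarith
    have ha1 : a ≤ 1 := by linarith
    have hRlow : μ/2 * ‖x - y‖^2 ≤
        (1/2 + τ/(2*σ)) * ⟪x.1 - y.1, T (x.1 - y.1)⟫ + (τ/(2*σ)) * ‖x.2 - y.2‖^2 := by
      have hd1 : x.1 - y.1 ∈ LinearMap.range T := Submodule.sub_mem _ hx hy
      have hT1 : lam * ‖x.1 - y.1‖^2 ≤ ⟪x.1 - y.1, T (x.1 - y.1)⟫ := hlam _ hd1
      have hnm : ‖x - y‖ = max ‖x.1 - y.1‖ ‖x.2 - y.2‖ := by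
        rw [Prod.norm_def]; rfl
      have hc1 : (0:ℝ) ≤ 1/2 + τ/(2*σ) := by positivity
      have hc2 : (0:ℝ) ≤ τ/(2*σ) := by positivity
      rcases le_total ‖x.1 - y.1‖ ‖x.2 - y.2‖ with h | h
      · rw [hnm, max_eq_right h]
        nlinarith [norm_nonneg (x.1 - y.1), norm_nonneg (x.2 - y.2), hpsd (x.1 - y.1),
          mul_le_mul_of_nonneg_left hT1 hc1]
      · rw [hnm, max_eq_left h]
        nlinarith [norm_nonneg (x.1 - y.1), norm_nonneg (x.2 - y.2),
          mul_le_mul_of_nonneg_left hT1 hc1, sq_nonneg ‖x.2 - y.2‖,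
          mul_nonneg hc2 (sq_nonneg ‖x.2 - y.2‖)]
    have hGc := hGconv x y a ha ha1
    have hQc := hQdcombo x y a ha ha1
    have hdx := hdecomp x
    have hdy := hdecomp y
    have hdc := hdecomp (a • x + (1-a) • y)
    have hab' : (0:ℝ) ≤ a * (1-a) := mul_nonneg ha (by linarith)
    have hfinal := mul_le_mul_of_nonneg_left hRlow hab'
    simp only [smul_eq_mul]
    set R : ℝ := (1/2 + τ/(2*σ)) * ⟪x.1 - y.1, T (x.1 - y.1)⟫ + (τ/(2*σ)) * ‖x.2 - y.2‖^2
      with hRdef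
    set k : ℝ := 1/(2*σ) * ‖xh‖^2 with hkdef
    calc φ (a • x + (1-a) • y)
        = G (a • x + (1-a) • y) + Qd (a • x + (1-a) • y) - k := hdc
      _ ≤ (a * G x + (1-a) * G y) +
            (a * Qd x + (1-a) * Qd y - a * (1-a) * R) - k := by
          rw [hQc]; linarith [hGc]
      _ = a * φ x + (1-a) * φ y - a * (1-a) * R := by rw [hdx, hdy]; ring
      _ ≤ a * φ x + (1-a) * φ y - a * (1-a) * (μ/2 * ‖x - y‖^2) := by linarith [hfinal]
  have hconv : ConvexOn ℝ {pr : EuclideanSpace ℝ (Fin n) × EuclideanSpace ℝ (Fin m) | pr.1 ∈ LinearMap.range T} φ := by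
    refine ⟨hsconvex, ?_⟩
    intro x hx y hy a b' ha hb hab
    have h := hsconv.2 hx hy ha hb hab
    have hnn : 0 ≤ a * b' * (μ/2 * ‖x - y‖^2) := by positivity
    simp only [smul_eq_mul] at h ⊢
    linarith
  -- smoothness
  have hφcd : ContDiff ℝ 1 φ := by
    have hmor := PhaseIIAux.mor_contDiff hCc hproj
    have h1 : ContDiff ℝ 1 (fun pr : EuclideanSpace ℝ (Fin n) × EuclideanSpace ℝ (Fin m) => T pr.1) := by
      exact (LinearMap.toContinuousLinearMap T).contDiff.comp contDiff_fst
    have h2 : ContDiff ℝ 1 (fun pr : EuclideanSpace ℝ (Fin n) × EuclideanSpace ℝ (Fin m) => B pr.2) := by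
      exact (LinearMap.toContinuousLinearMap B).contDiff.comp contDiff_snd
    have hv : ContDiff ℝ 1 (fun pr : EuclideanSpace ℝ (Fin n) × EuclideanSpace ℝ (Fin m) => xh - σ • (T pr.1 - B pr.2 + c)) :=
      contDiff_const.sub (((h1.sub h2).add contDiff_const).const_smul σ)
    have hGcd : ContDiff ℝ 1 G := by
      refine ContDiff.sub ?_ ?_
      · exact contDiff_const.mul (hmor.comp hv)
      · exact contDiff_const.inner ℝ contDiff_snd
    have hQdcd : ContDiff ℝ 1 Qd := by
      refine ContDiff.add ?_ ?_
      · exact contDiff_const.mul (contDiff_fst.inner ℝ h1)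
      · refine contDiff_const.mul (ContDiff.add ?_ ?_)
        · have h1w : ContDiff ℝ 1 (fun pr : EuclideanSpace ℝ (Fin n) × EuclideanSpace ℝ (Fin m) =>
              T (pr.1 - wh)) :=
            (LinearMap.toContinuousLinearMap T).contDiff.comp (contDiff_fst.sub contDiff_const)
          exact (contDiff_fst.sub contDiff_const).inner ℝ h1w
        · have : (fun pr : EuclideanSpace ℝ (Fin n) × EuclideanSpace ℝ (Fin m) => ‖pr.2 - yh‖^2) =
              fun pr : EuclideanSpace ℝ (Fin n) × EuclideanSpace ℝ (Fin m) => ⟪pr.2 - yh, pr.2 - yh⟫ := by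
            funext pr; rw [real_inner_self_eq_norm_sq]
          rw [this]
          exact (contDiff_snd.sub contDiff_const).inner ℝ (contDiff_snd.sub contDiff_const)
    have : φ = fun pr => G pr + Qd pr - (1/(2*σ)) * ‖xh‖^2 := funext hdecomp
    rw [this]
    exact (hGcd.add hQdcd).sub contDiff_const
  have hφcont : Continuous φ := hφcd.continuous
  -- compact sublevel sets
  have hcompact : ∀ pr0 ∈ {pr : EuclideanSpace ℝ (Fin n) × EuclideanSpace ℝ (Fin m) | pr.1 ∈ LinearMap.range T},
      IsCompact {pr | pr ∈ {pr : EuclideanSpace ℝ (Fin n) × EuclideanSpace ℝ (Fin m) | pr.1 ∈ LinearMap.range T} ∧ φ pr ≤ φ pr0} := by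
    intro pr0 hpr0
    set K := {pr | pr ∈ {pr : EuclideanSpace ℝ (Fin n) × EuclideanSpace ℝ (Fin m) | pr.1 ∈ LinearMap.range T} ∧ φ pr ≤ φ pr0} with hK
    have hKclosed : IsClosed K := by
      have : K = {pr : EuclideanSpace ℝ (Fin n) × EuclideanSpace ℝ (Fin m) | pr.1 ∈ LinearMap.range T} ∩ {pr | φ pr ≤ φ pr0} := rfl
      rw [this]
      exact hsclosed.inter (isClosed_le hφcont continuous_const)
    have hBcompact : IsCompact (Metric.closedBall pr0 1 ∩
        {pr : EuclideanSpace ℝ (Fin n) × EuclideanSpace ℝ (Fin m) | pr.1 ∈ LinearMap.range T}) :=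
      (isCompact_closedBall pr0 1).inter_right hsclosed
    have hBne : (Metric.closedBall pr0 1 ∩
        {pr : EuclideanSpace ℝ (Fin n) × EuclideanSpace ℝ (Fin m) | pr.1 ∈ LinearMap.range T}).Nonempty :=
      ⟨pr0, Metric.mem_closedBall_self zero_le_one, hpr0⟩
    obtain ⟨mb, _, hmb⟩ := hBcompact.exists_isMinOn hBne hφcont.continuousOn
    set R : ℝ := max 1 (1 + 2*(φ pr0 - φ mb)/μ) with hR
    have hKsub : K ⊆ Metric.closedBall pr0 R := by
      intro x hxK
      obtain ⟨hxs, hxle⟩ := hxK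
      rw [Metric.mem_closedBall, dist_eq_norm]
      by_contra hcon
      push_neg at hcon
      set r : ℝ := ‖x - pr0‖ with hr
      have hr1 : 1 < r := lt_of_le_of_lt (le_max_left _ _) hcon
      have hrpos : 0 < r := by linarith
      set t : ℝ := 1/r with ht
      have htpos : 0 < t := by positivity
      have ht1 : t < 1 := by rw [ht]; rw [div_lt_one hrpos]; exact hr1
      set p := t • x + (1-t) • pr0 with hp
      have hps : p ∈ {pr : EuclideanSpace ℝ (Fin n) × EuclideanSpace ℝ (Fin m) | pr.1 ∈ LinearMap.range T} :=
        hsconvex hxs hpr0 htpos.le (by linarith) (by ring)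
      have hpball : p ∈ Metric.closedBall pr0 1 := by
        rw [Metric.mem_closedBall, dist_eq_norm]
        have : p - pr0 = t • (x - pr0) := by rw [hp]; module
        rw [this, norm_smul, Real.norm_eq_abs, abs_of_pos htpos, ← hr, ht]
        rw [div_mul_cancel₀ _ hrpos.ne']
      have hmbp : φ mb ≤ φ p := hmb ⟨hpball, hps⟩
      have hstrong := hsconv.2 hxs hpr0 htpos.le (by linarith : (0:ℝ) ≤ 1 - t)
        (by ring : t + (1-t) = 1)
      simp only [smul_eq_mul, ← hp] at hstrong
      have hnorm : ‖x - pr0‖ = r := rfl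
      rw [hnorm] at hstrong
      have htr : t * r = 1 := by rw [ht]; field_simp
      have hkey : φ mb ≤ φ pr0 - (1-t) * (μ/2) * r := by
        have h2 : t * φ x ≤ t * φ pr0 := mul_le_mul_of_nonneg_left hxle htpos.le
        have h3 : t * (1-t) * (μ/2 * r^2) = (1-t) * (μ/2) * r := by
          rw [pow_two, show t * (1-t) * (μ/2 * (r*r)) = (1-t) * (μ/2) * ((t*r) * r) by ring,
            htr]; ring
        nlinarith [hstrong, hmbp]
      have hfin : r ≤ 1 + 2*(φ pr0 - φ mb)/μ := by
        have h4 : (1-t) * (μ/2) * r ≤ φ pr0 - φ mb := by linarith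
        have h5 : (1-t) * r = r - 1 := by
          rw [sub_mul, one_mul, ht, div_mul_cancel₀ _ hrpos.ne']
        have h6 : (μ/2) * (r - 1) ≤ φ pr0 - φ mb := by nlinarith [h4]
        have h7 : r - 1 ≤ 2*(φ pr0 - φ mb)/μ := by
          rw [le_div_iff₀ hμpos]
          nlinarith [h6]
        linarith
      have : r ≤ R := le_trans hfin (le_max_right _ _)
      linarith [hcon]
    exact (isCompact_closedBall pr0 R).of_isClosed_subset hKclosed hKsub
  -- unique minimizer
  have huniq : ∃! pr, pr ∈ {pr : EuclideanSpace ℝ (Fin n) × EuclideanSpace ℝ (Fin m) | pr.1 ∈ LinearMap.range T} ∧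
      ∀ qr ∈ {pr : EuclideanSpace ℝ (Fin n) × EuclideanSpace ℝ (Fin m) | pr.1 ∈ LinearMap.range T}, φ pr ≤ φ qr := by
    have h0s : ((0 : EuclideanSpace ℝ (Fin n)), (0 : EuclideanSpace ℝ (Fin m))) ∈ {pr : EuclideanSpace ℝ (Fin n) × EuclideanSpace ℝ (Fin m) | pr.1 ∈ LinearMap.range T} :=
      by simp only [Set.mem_setOf_eq]; exact Submodule.zero_mem _
    set pr0 : EuclideanSpace ℝ (Fin n) × EuclideanSpace ℝ (Fin m) := ((0 : EuclideanSpace ℝ (Fin n)), (0 : EuclideanSpace ℝ (Fin m))) with hpr0d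
    have hKcompact := hcompact pr0 h0s
    have hKne : {pr | pr ∈ {pr : EuclideanSpace ℝ (Fin n) × EuclideanSpace ℝ (Fin m) | pr.1 ∈ LinearMap.range T} ∧ φ pr ≤ φ pr0}.Nonempty :=
      ⟨pr0, h0s, le_refl _⟩
    obtain ⟨pm, hpmK, hpmmin⟩ := hKcompact.exists_isMinOn hKne hφcont.continuousOn
    have hglobal : ∀ qr ∈ {pr : EuclideanSpace ℝ (Fin n) × EuclideanSpace ℝ (Fin m) | pr.1 ∈ LinearMap.range T}, φ pm ≤ φ qr := by
      intro qr hqr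
      rcases le_or_gt (φ qr) (φ pr0) with h | h
      · exact hpmmin ⟨hqr, h⟩
      · exact le_trans (hpmmin ⟨h0s, le_refl _⟩) h.le
    refine ⟨pm, ⟨hpmK.1, hglobal⟩, ?_⟩
    rintro qm ⟨hqms, hqmmin⟩
    by_contra hne
    have heq : φ qm = φ pm := le_antisymm (hqmmin pm hpmK.1) (hglobal qm hqms)
    have hstrict := (hsconv.strictConvexOn hμpos).2 hqms hpmK.1 hne
      (by norm_num : (0:ℝ) < 1/2) (by norm_num : (0:ℝ) < 1/2) (by norm_num)
    have hmem : (1/2 : ℝ) • qm + (1/2 : ℝ) • pm ∈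
        {pr : EuclideanSpace ℝ (Fin n) × EuclideanSpace ℝ (Fin m) | pr.1 ∈ LinearMap.range T} :=
      hsconvex hqms hpmK.1 (by norm_num) (by norm_num) (by norm_num)
    have := hglobal _ hmem
    simp only [smul_eq_mul] at hstrict
    rw [heq] at hstrict
    linarith [hstrict, this]
  exact ⟨hconv, hφcd.contDiffOn, ⟨μ, hμpos, hsconv⟩, huniq, hcompact⟩
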